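/- arXiv:1408.4664 — 2 statements merged into one kernel-verified Lean document; each statement's English description precedes it below -/
import Mathlib

section
/- Let X be a separable metric space, let ν be a Borel measure on X, let g : X → X be a homeomorphism, and let w : X → (0,∞) be continuous. Suppose that for every Borel set A ⊆ X one has ν(g(A)) ≤ (sup_{x∈A} w(x)) · ν(A). Then for every Borel set B ⊆ X, ν(g(B)) ≤ ∫_B w dν. -/
/-!
Write `ρ A = ν (g '' A)`, a measure. For a scale `c > 1` cut `B` into the layers where
`c ^ n ≤ w < c ^ (n + 1)`: on a layer the hypothesis gives `ρ ≤ c ^ (n + 1) ν`, while the integral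
of `w` is at least `c ^ n ν`, so summing over the layers `ρ B ≤ c ∫_B w dν`; let `c → 1`.
The layers cover `{0 < w < ∞}`; the set `{w = 0}` is `ρ`-null by the hypothesis, and on
`{w = ∞}` the bound is trivial, so this works for any measurable `w : X → [0, ∞]`.
-/

open MeasureTheory Filter Set Topology
open scoped ENNReal

section
variable {X : Type*} [MeasurableSpace X] {ρ μ : Measure X} {f : X → ℝ≥0∞}

theorem measure_le_mul_setLIntegral_of_mapsTo_Icc
    (hρ : ∀ A, MeasurableSet A → ρ A ≤ (⨆ x ∈ A, f x) * μ A)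
    {A : Set X} (hA : MeasurableSet A) {a c : ℝ≥0∞} (hfA : MapsTo f A (Icc a (c * a))) :
    ρ A ≤ c * ∫⁻ x in A, f x ∂μ :=
  calc ρ A ≤ (⨆ x ∈ A, f x) * μ A := hρ A hA
    _ ≤ c * a * μ A := by gcongr; exact iSup₂_le fun x hx => (hfA hx).2
    _ = c * ∫⁻ _ in A, a ∂μ := by rw [setLIntegral_const, mul_assoc]
    _ ≤ c * ∫⁻ x in A, f x ∂μ := by
      gcongr c * ?_
      exact setLIntegral_mono' hA fun x hx => (hfA hx).1

theorem measure_le_mul_setLIntegral_of_ne_top (hf : Measurable f)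
    (hρ : ∀ A, MeasurableSet A → ρ A ≤ (⨆ x ∈ A, f x) * μ A)
    {B : Set X} (hB : MeasurableSet B) (hB_ne_top : ∀ x ∈ B, f x ≠ ∞)
    {c : ℝ≥0∞} (hc : 1 < c) (hc_ne_top : c ≠ ∞) :
    ρ B ≤ c * ∫⁻ x in B, f x ∂μ := by
  have hc_ne_zero : c ≠ 0 := (zero_lt_one.trans hc).ne'
  set L : ℤ → Set X := fun n => B ∩ f ⁻¹' Ico (c ^ n) (c ^ (n + 1))
  have hL_meas (n : ℤ) : MeasurableSet (L n) := hB.inter (hf measurableSet_Ico)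
  have hL_disj : Pairwise (Function.onFun Disjoint L) := fun m n hmn =>
    (((ENNReal.monotone_zpow hc.le).pairwise_disjoint_on_Ico_succ hmn).preimage f).mono
      inter_subset_right inter_subset_right
  have hcover : B ⊆ (B ∩ f ⁻¹' {0}) ∪ ⋃ n, L n := by
    intro x hx
    by_cases hx0 : f x = 0
    · exact Or.inl ⟨hx, hx0⟩
    · obtain ⟨n, hn⟩ := ENNReal.exists_mem_Ico_zpow hx0 (hB_ne_top x hx) hc hc_ne_top
      exact Or.inr (mem_iUnion.2 ⟨n, hx, hn⟩)
  have hzero : ρ (B ∩ f ⁻¹' {0}) = 0 := by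
    refine le_antisymm ((hρ _ (hB.inter (hf (measurableSet_singleton 0)))).trans ?_) bot_le
    rw [nonpos_iff_eq_zero, mul_eq_zero]
    exact Or.inl (le_antisymm (iSup₂_le fun x hx => hx.2.le) bot_le)
  have hL (n : ℤ) : ρ (L n) ≤ c * ∫⁻ x in L n, f x ∂μ :=
    measure_le_mul_setLIntegral_of_mapsTo_Icc hρ (hL_meas n) fun x hx =>
      ⟨hx.2.1, hx.2.2.le.trans_eq <| by
        rw [ENNReal.zpow_add hc_ne_zero hc_ne_top, zpow_one, mul_comm]⟩
  calc ρ B ≤ ρ (B ∩ f ⁻¹' {0}) + ρ (⋃ n, L n) :=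
        (measure_mono hcover).trans (measure_union_le _ _)
    _ ≤ ∑' n, ρ (L n) := by rw [hzero, zero_add]; exact measure_iUnion_le _
    _ ≤ ∑' n, c * ∫⁻ x in L n, f x ∂μ := ENNReal.tsum_le_tsum hL
    _ = c * ∫⁻ x in ⋃ n, L n, f x ∂μ := by
      rw [ENNReal.tsum_mul_left, lintegral_iUnion hL_meas hL_disj]
    _ ≤ c * ∫⁻ x in B, f x ∂μ := by gcongr; exact iUnion_subset fun n => inter_subset_left

theorem measure_le_mul_setLIntegral (hf : Measurable f)
    (hρ : ∀ A, MeasurableSet A → ρ A ≤ (⨆ x ∈ A, f x) * μ A)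
    {B : Set X} (hB : MeasurableSet B) {c : ℝ≥0∞} (hc : 1 < c) (hc_ne_top : c ≠ ∞) :
    ρ B ≤ c * ∫⁻ x in B, f x ∂μ := by
  have hT : MeasurableSet (f ⁻¹' {∞}) := hf (measurableSet_singleton ∞)
  have hfin : ρ (B \ f ⁻¹' {∞}) ≤ c * ∫⁻ x in B \ f ⁻¹' {∞}, f x ∂μ :=
    measure_le_mul_setLIntegral_of_ne_top hf hρ (hB.diff hT) (fun x hx => hx.2) hc hc_ne_top
  have hinf : ρ (B ∩ f ⁻¹' {∞}) ≤ c * ∫⁻ x in B ∩ f ⁻¹' {∞}, f x ∂μ :=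
    measure_le_mul_setLIntegral_of_mapsTo_Icc hρ (hB.inter hT) fun x hx =>
      ⟨hx.2.ge, by rw [ENNReal.mul_top (zero_lt_one.trans hc).ne']; exact le_top⟩
  calc ρ B ≤ ρ (B ∩ f ⁻¹' {∞}) + ρ (B \ f ⁻¹' {∞}) := measure_le_inter_add_sdiff _ _ _
    _ ≤ c * ∫⁻ x in B ∩ f ⁻¹' {∞}, f x ∂μ + c * ∫⁻ x in B \ f ⁻¹' {∞}, f x ∂μ :=
      add_le_add hinf hfin
    _ = c * ∫⁻ x in B, f x ∂μ := by rw [← mul_add, lintegral_inter_add_sdiff _ _ hT]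

theorem le_withDensity_of_le_iSup_mul (hf : Measurable f)
    (hρ : ∀ A, MeasurableSet A → ρ A ≤ (⨆ x ∈ A, f x) * μ A) :
    ρ ≤ μ.withDensity f := by
  refine Measure.le_iff.2 fun B hB => ?_
  rw [withDensity_apply _ hB]
  have hlim : Tendsto (· * ∫⁻ x in B, f x ∂μ) (𝓝[>] 1) (𝓝 (∫⁻ x in B, f x ∂μ)) := by
    simpa using (ENNReal.continuousAt_mul_const (Or.inr one_ne_zero)).mono_left nhdsWithin_le_nhds
  refine ge_of_tendsto hlim ?_
  filter_upwards [self_mem_nhdsWithin, nhdsWithin_le_nhds (Iio_mem_nhds ENNReal.one_lt_top)]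
    with c hc hc_lt_top
  exact measure_le_mul_setLIntegral hf hρ hB hc hc_lt_top.ne

end

theorem stmt_7_general {X : Type*} [MetricSpace X]
    [MeasurableSpace X] [BorelSpace X]
    (ν : Measure X) (g : X ≃ₜ X) (w : X → ℝ)
    (hw_cont : Continuous w)
    (h : ∀ A : Set X, MeasurableSet A →
      ν (g '' A) ≤ (⨆ x ∈ A, ENNReal.ofReal (w x)) * ν A) :
    ∀ B : Set X, MeasurableSet B →
      ν (g '' B) ≤ ∫⁻ x in B, ENNReal.ofReal (w x) ∂ν := by
  have hmap (A : Set X) (hA : MeasurableSet A) : ν.map g.symm A = ν (g '' A) := by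
    rw [Measure.map_apply g.symm.measurable hA, g.image_eq_preimage_symm]
  have hle : ν.map g.symm ≤ ν.withDensity fun x => ENNReal.ofReal (w x) :=
    le_withDensity_of_le_iSup_mul hw_cont.measurable.ennreal_ofReal
      fun A hA => (hmap A hA).trans_le (h A hA)
  intro B hB
  rw [← hmap B hB, ← withDensity_apply _ hB]
  exact hle B

/-- If `ν` is a Borel measure on a separable metric space `X`, `g : X → X` is a
homeomorphism, `w : X → (0,∞)` is continuous, and `ν(g(A)) ≤ (sup_A w) · ν(A)` for every
Borel set `A`, then `ν(g(B)) ≤ ∫_B w dν` for every Borel set `B`. -/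
theorem stmt_7 {X : Type*} [MetricSpace X] [TopologicalSpace.SeparableSpace X]
    [MeasurableSpace X] [BorelSpace X]
    (ν : Measure X) (g : X ≃ₜ X) (w : X → ℝ)
    (hw_pos : ∀ x, 0 < w x) (hw_cont : Continuous w)
    (h : ∀ A : Set X, MeasurableSet A →
      ν (g '' A) ≤ (⨆ x ∈ A, ENNReal.ofReal (w x)) * ν A) :
    ∀ B : Set X, MeasurableSet B →
      ν (g '' B) ≤ ∫⁻ x in B, ENNReal.ofReal (w x) ∂ν :=
  stmt_7_general ν g w hw_cont h
end

section
/- Let δ > 0 and k > 0 with k ≠ δ and Δ := 2δ − k > 0. Let Ψ : ℝ → ℝ be differentiable and monotonic on [T,∞) for some T, with Ψ'(t) → 0 as t → ∞. Define θ(r) = r · exp(Ψ(log(1/r))/(k−δ)) for r ∈ (0, e^{−T}). Then there exists r₀ ∈ (0, e^{−T}) such that θ is strictly increasing on (0, r₀) with θ(r) → 0 as r → 0+; moreover, for any α > 0 and λ ∈ (0,1), the series Σ_n (θ⁻¹(λⁿ/α)/λⁿ)^Δ (summed over all sufficiently large n, for which λⁿ/α lies in the image θ((0,r₀))) converges if and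 only if the series Σ_{t=1}^∞ exp(−(Δ/(k−δ))·Ψ(t)) converges. -/
open Filter Set Real Topology

/-!
With `c = k - δ` and `φ = logProfile c Ψ`, we have `θ (exp (-s)) = exp (-φ s)`. Since `Ψ' → 0`,
far out `φ` has all its difference quotients in `[1/2, 3/2]`; hence `θ` is increasing and
`θ r = O(√r)`. If `θ rₙ = lⁿ/α` and `uₙ = -log rₙ`, then `φ uₙ = log α - n log l`, so the gaps of
`(uₙ)` stay between two positive constants, and `(rₙ/lⁿ)^Δ = α^{-Δ} g uₙ` with
`g = exp (-(Δ/c) Ψ)`. As `g` is eventually monotone, `Σ g uₙ` and `Σ g t` converge together: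
if `g` increases neither converges, and if `g` decreases, the linear growth of both
sequences gives `g uₙ ≤ g (⌊n/q⌋ + 1)` for a fixed `q` and all large `n`, and symmetrically.
-/

theorem summable_comp_nat_div {f : ℕ → ℝ} (hf0 : ∀ n, 0 ≤ f n) (hf : Summable f) {q : ℕ}
    (hq : q ≠ 0) : Summable fun n => f (n / q) := by
  have : NeZero q := ⟨hq⟩
  have h : Summable fun p : ℕ × Fin q => f p.1 :=
    (summable_prod_of_nonneg fun p => hf0 p.1).2
      ⟨fun _ => .of_finite, by simpa [tsum_fintype] using hf.mul_left (q : ℝ)⟩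
  exact (Nat.divModEquiv q).summable_iff.2 h

theorem add_nat_mul_le_of_add_le_succ {u : ℕ → ℝ} {d : ℝ} (h : ∀ n, u n + d ≤ u (n + 1))
    (n : ℕ) : u 0 + n * d ≤ u n := by
  induction n with
  | zero => simp
  | succ n ih => push_cast; linarith [h n]

theorem le_add_nat_mul_of_succ_le_add {u : ℕ → ℝ} {K : ℝ} (h : ∀ n, u (n + 1) ≤ u n + K)
    (n : ℕ) : u n ≤ u 0 + n * K := by
  have := add_nat_mul_le_of_add_le_succ (u := fun n => -u n) (d := -K)
    (fun n => by linarith [h n]) n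
  linarith

theorem AntitoneOn.summable_comp_of_gaps {g : ℝ → ℝ} {M d K : ℝ} (hg0 : ∀ x, 0 ≤ g x)
    (hg : AntitoneOn g (Ici M)) {u v : ℕ → ℝ} (hu : ∀ n, M ≤ u n) (hv : ∀ n, M ≤ v n)
    (hd : 0 < d) (hud : ∀ n, u n + d ≤ u (n + 1)) (hvK : ∀ n, v (n + 1) ≤ v n + K)
    (hsum : Summable (g ∘ v)) : Summable (g ∘ u) := by
  -- `u n` grows at least like `n d`, while `v (n / q)` grows at most like `n K / q ≤ n d / 2`.
  obtain ⟨q, hq0, hqK⟩ : ∃ q : ℕ, q ≠ 0 ∧ 2 * K ≤ q * d :=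
    ⟨⌈2 * K / d⌉₊ + 1, by omega, by
      push_cast; rw [← div_le_iff₀ hd]; linarith [Nat.le_ceil (2 * K / d)]⟩
  have hdiv (n : ℕ) : ((n / q : ℕ) : ℝ) * K ≤ n * (d / 2) := by
    have hA : 0 ≤ ((n / q : ℕ) : ℝ) := Nat.cast_nonneg _
    have hAq : ((n / q : ℕ) : ℝ) * q ≤ n := by exact_mod_cast Nat.div_mul_le_self n q
    nlinarith
  have hclose : ∀ᶠ n : ℕ in atTop, v (n / q) ≤ u n := by
    filter_upwards [eventually_ge_atTop ⌈2 * (v 0 - u 0) / d⌉₊] with n hn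
    have hn' := (div_le_iff₀ hd).1 (Nat.ceil_le.1 hn)
    linarith [le_add_nat_mul_of_succ_le_add hvK (n / q), add_nat_mul_le_of_add_le_succ hud n,
      hdiv n]
  refine (summable_comp_nat_div (fun n => hg0 _) hsum hq0).of_norm_bounded_eventually_nat ?_
  filter_upwards [hclose] with n hn
  rw [Function.comp_apply, norm_of_nonneg (hg0 _)]
  exact hg (hv _) (hu _) hn

theorem MonotoneOn.not_summable_comp {g : ℝ → ℝ} {M : ℝ} (hg0 : ∀ x, 0 < g x)
    (hg : MonotoneOn g (Ici M)) {u : ℕ → ℝ} (hu : ∀ n, M ≤ u n) : ¬Summable (g ∘ u) := by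
  intro hs
  obtain ⟨n, hn⟩ := (hs.tendsto_atTop_zero.eventually_lt_const (hg0 M)).exists
  exact not_le.2 hn (hg self_mem_Ici (hu n) (hu n))

theorem summable_comp_iff_of_gaps {g : ℝ → ℝ} {M : ℝ} (hg0 : ∀ x, 0 < g x)
    (hg : MonotoneOn g (Ici M) ∨ AntitoneOn g (Ici M)) {u v : ℕ → ℝ} (hu : ∀ n, M ≤ u n)
    (hv : ∀ n, M ≤ v n) {a b a' b' : ℝ} (ha : 0 < a) (ha' : 0 < a')
    (hua : ∀ n, u n + a ≤ u (n + 1)) (hub : ∀ n, u (n + 1) ≤ u n + b)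
    (hva : ∀ n, v n + a' ≤ v (n + 1)) (hvb : ∀ n, v (n + 1) ≤ v n + b') :
    Summable (g ∘ u) ↔ Summable (g ∘ v) := by
  rcases hg with hg | hg
  · exact iff_of_false (hg.not_summable_comp hg0 hu) (hg.not_summable_comp hg0 hv)
  · have hg0' x := (hg0 x).le
    exact ⟨hg.summable_comp_of_gaps hg0' hv hu ha' hva hub,
      hg.summable_comp_of_gaps hg0' hu hv ha hua hvb⟩

theorem monotoneOn_or_antitoneOn_exp_mul {f : ℝ → ℝ} {s : Set ℝ}
    (hf : MonotoneOn f s ∨ AntitoneOn f s) (a : ℝ) :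
    MonotoneOn (fun x => exp (a * f x)) s ∨ AntitoneOn (fun x => exp (a * f x)) s := by
  have hmul : MonotoneOn (fun x => a * f x) s ∨ AntitoneOn (fun x => a * f x) s := by
    rcases le_total 0 a with ha | ha <;> rcases hf with hf | hf
    · exact .inl fun x hx y hy hxy => mul_le_mul_of_nonneg_left (hf hx hy hxy) ha
    · exact .inr fun x hx y hy hxy => mul_le_mul_of_nonneg_left (hf hx hy hxy) ha
    · exact .inr fun x hx y hy hxy => mul_le_mul_of_nonpos_left (hf hx hy hxy) ha
    · exact .inl fun x hx y hy hxy => mul_le_mul_of_nonpos_left (hf hx hy hxy) ha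
  exact hmul.imp exp_monotone.comp_monotoneOn exp_monotone.comp_antitoneOn

theorem exists_abs_sub_le_of_tendsto_deriv {Ψ Ψ' : ℝ → ℝ} {T ε : ℝ}
    (hdiff : ∀ t ∈ Ici T, HasDerivWithinAt Ψ (Ψ' t) (Ici T) t)
    (hlim : Tendsto Ψ' atTop (𝓝 0)) (hε : 0 < ε) :
    ∃ T₁, T ≤ T₁ ∧ ∀ x y, T₁ ≤ x → x ≤ y → |Ψ y - Ψ x| ≤ ε * (y - x) := by
  obtain ⟨T', hT'⟩ := eventually_atTop.1 (hlim.eventually (Metric.closedBall_mem_nhds 0 hε))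
  refine ⟨max T T', le_max_left _ _, fun x y hx hxy => ?_⟩
  have hsub : Ici (max T T') ⊆ Ici T := Ici_subset_Ici.2 (le_max_left _ _)
  have := (convex_Ici (max T T')).norm_image_sub_le_of_norm_hasDerivWithin_le
    (fun t ht => (hdiff t (hsub ht)).mono hsub)
    (fun t ht => by simpa using hT' t (le_of_max_le_right ht)) hx (hx.trans hxy)
  simpa [abs_of_nonneg (sub_nonneg.2 hxy)] using this

noncomputable def logProfile (c : ℝ) (Ψ : ℝ → ℝ) (s : ℝ) : ℝ := s - Ψ s / c

theorem mul_exp_eq_exp_neg_logProfile {r : ℝ} (hr : 0 < r) (c : ℝ) (Ψ : ℝ → ℝ) :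
    r * exp (Ψ (-log r) / c) = exp (-logProfile c Ψ (-log r)) := by
  rw [logProfile, show -(-log r - Ψ (-log r) / c) = log r + Ψ (-log r) / c by ring, exp_add,
    exp_log hr]

theorem continuousOn_logProfile {c T : ℝ} {Ψ : ℝ → ℝ} (hΨ : ContinuousOn Ψ (Ici T)) :
    ContinuousOn (logProfile c Ψ) (Ici T) :=
  continuousOn_id.sub (hΨ.div_const c)

theorem exists_logProfile_bounds {c T : ℝ} {Ψ Ψ' : ℝ → ℝ} (hc : c ≠ 0)
    (hdiff : ∀ t ∈ Ici T, HasDerivWithinAt Ψ (Ψ' t) (Ici T) t)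
    (hlim : Tendsto Ψ' atTop (𝓝 0)) :
    ∃ T₁, T ≤ T₁ ∧ ∀ x y, T₁ ≤ x → x ≤ y →
      (y - x) / 2 ≤ logProfile c Ψ y - logProfile c Ψ x ∧
      logProfile c Ψ y - logProfile c Ψ x ≤ 3 / 2 * (y - x) := by
  have hc' : 0 < |c| := abs_pos.2 hc
  obtain ⟨T₁, hT₁, hflat⟩ := exists_abs_sub_le_of_tendsto_deriv hdiff hlim (half_pos hc')
  refine ⟨T₁, hT₁, fun x y hx hxy => ?_⟩
  have h : |Ψ y / c - Ψ x / c| ≤ (y - x) / 2 := by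
    rw [← sub_div, abs_div, div_le_iff₀ hc']
    linarith [hflat x y hx hxy]
  unfold logProfile
  constructor <;> linarith [abs_le.1 h]

theorem gaps_of_slope_bounds {φ : ℝ → ℝ} {M L : ℝ} (hL : 0 < L)
    (hφ : ∀ x y, M ≤ x → x ≤ y → (y - x) / 2 ≤ φ y - φ x ∧ φ y - φ x ≤ 3 / 2 * (y - x))
    {u : ℕ → ℝ} (hu : ∀ n, M ≤ u n) (hstep : ∀ n, φ (u (n + 1)) = φ (u n) + L) (n : ℕ) :
    u n + 2 / 3 * L ≤ u (n + 1) ∧ u (n + 1) ≤ u n + 2 * L := by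
  rcases le_total (u n) (u (n + 1)) with h | h
  · have := hφ _ _ (hu n) h
    constructor <;> linarith [hstep n]
  · have := hφ _ _ (hu (n + 1)) h
    constructor <;> linarith [hstep n]

theorem lt_neg_log_of_mem_Ioo {r T₀ : ℝ} (hr : r ∈ Ioo 0 (exp (-T₀))) : T₀ < -log r := by
  linarith [(log_lt_iff_lt_exp hr.1).2 hr.2]

section ExpConjugate

variable {θ φ : ℝ → ℝ} {T₀ : ℝ}

theorem strictMonoOn_of_eq_exp_neg_comp (hθ : ∀ r ∈ Ioo 0 (exp (-T₀)), θ r = exp (-φ (-log r)))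
    (hφ : ∀ x y, T₀ ≤ x → x ≤ y → (y - x) / 2 ≤ φ y - φ x) :
    StrictMonoOn θ (Ioo 0 (exp (-T₀))) := by
  intro r hr s hs hrs
  have hlog : -log s < -log r := neg_lt_neg (log_lt_log hr.1 hrs)
  rw [hθ r hr, hθ s hs, exp_lt_exp]
  linarith [hφ _ _ (lt_neg_log_of_mem_Ioo hs).le hlog.le]

theorem tendsto_nhdsGT_zero_of_eq_exp_neg_comp
    (hθ : ∀ r ∈ Ioo 0 (exp (-T₀)), θ r = exp (-φ (-log r)))
    (hφ : ∀ x y, T₀ ≤ x → x ≤ y → (y - x) / 2 ≤ φ y - φ x) :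
    Tendsto θ (𝓝[>] 0) (𝓝 0) := by
  have hmem : Ioo 0 (exp (-T₀)) ∈ 𝓝[>] (0 : ℝ) := Ioo_mem_nhdsGT (exp_pos _)
  have hbound (r : ℝ) (hr : r ∈ Ioo 0 (exp (-T₀))) :
      θ r ≤ exp (T₀ / 2 - φ T₀) * exp (log r / 2) := by
    rw [hθ r hr, ← exp_add, exp_le_exp]
    linarith [hφ T₀ (-log r) le_rfl (lt_neg_log_of_mem_Ioo hr).le]
  have hlim : Tendsto (fun r => exp (T₀ / 2 - φ T₀) * exp (log r / 2)) (𝓝[>] 0) (𝓝 0) := by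
    simpa using (tendsto_exp_atBot.comp
      (tendsto_log_nhdsGT_zero.atBot_div_const two_pos)).const_mul (exp (T₀ / 2 - φ T₀))
  refine squeeze_zero' ?_ ?_ hlim
  · filter_upwards [hmem] with r hr
    exact hθ r hr ▸ (exp_pos _).le
  · filter_upwards [hmem] with r hr using hbound r hr

theorem continuousOn_of_eq_exp_neg_comp
    (hθ : ∀ r ∈ Ioo 0 (exp (-T₀)), θ r = exp (-φ (-log r))) (hφ : ContinuousOn φ (Ici T₀)) :
    ContinuousOn θ (Ioo 0 (exp (-T₀))) := by
  have hlog : ContinuousOn (fun r => -log r) (Ioo 0 (exp (-T₀))) :=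
    (continuousOn_log.mono fun r hr => hr.1.ne').neg
  exact (continuous_exp.comp_continuousOn
    (hφ.comp hlog fun r hr => (lt_neg_log_of_mem_Ioo hr).le).neg).congr hθ

end ExpConjugate

theorem exists_forall_pow_div_mem_image {θ : ℝ → ℝ} {r₀ : ℝ} (hr₀ : 0 < r₀)
    (hcont : ContinuousOn θ (Ioo 0 r₀)) (hlim : Tendsto θ (𝓝[>] 0) (𝓝 0))
    (hpos : ∀ r ∈ Ioo 0 r₀, 0 < θ r) {α l : ℝ} (hα : 0 < α) (hl : l ∈ Ioo 0 1) :
    ∃ N : ℕ, ∀ n, N ≤ n → l ^ n / α ∈ θ '' Ioo 0 r₀ := by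
  have hb : r₀ / 2 ∈ Ioo 0 r₀ := ⟨half_pos hr₀, half_lt_self hr₀⟩
  have hpow : Tendsto (fun n : ℕ => l ^ n / α) atTop (𝓝 0) := by
    simpa using (tendsto_pow_atTop_nhds_zero_of_lt_one hl.1.le hl.2).div_const α
  obtain ⟨N, hN⟩ := eventually_atTop.1 (hpow.eventually_lt_const (hpos _ hb))
  refine ⟨N, fun n hn => ?_⟩
  obtain ⟨a, hθa, ha⟩ :=
    ((hlim.eventually_lt_const (div_pos (pow_pos hl.1 n) hα)).and (Ioo_mem_nhdsGT hr₀)).exists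
  exact (isPreconnected_Ioo.image θ hcont).Icc_subset ⟨a, ha, rfl⟩ ⟨_, hb, rfl⟩
    ⟨hθa.le, (hN n hn).le⟩

theorem rpow_exp_neg_div_mul_exp_neg_logProfile {α : ℝ} (hα : 0 < α) (c Δ : ℝ)
    (Ψ : ℝ → ℝ) (u : ℝ) :
    (exp (-u) / (α * exp (-logProfile c Ψ u))) ^ Δ = α⁻¹ ^ Δ * exp (-(Δ / c) * Ψ u) := by
  have h : exp (-u) / (α * exp (-logProfile c Ψ u)) = α⁻¹ * exp (-Ψ u / c) := by
    rw [div_mul_eq_div_div_swap, ← exp_sub, logProfile, div_eq_mul_inv, mul_comm]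
    ring_nf
  rw [h, mul_rpow (inv_pos.2 hα).le (exp_pos _).le, ← exp_mul]
  ring_nf

theorem summable_rpow_invFunOn_div_pow_iff {c Δ T₀ α l : ℝ} {N : ℕ} {Ψ θ : ℝ → ℝ}
    (hθ : ∀ r ∈ Ioo 0 (exp (-T₀)), θ r = exp (-logProfile c Ψ (-log r)))
    (hφ : ∀ x y, T₀ ≤ x → x ≤ y → (y - x) / 2 ≤ logProfile c Ψ y - logProfile c Ψ x ∧
      logProfile c Ψ y - logProfile c Ψ x ≤ 3 / 2 * (y - x))
    (hmono : MonotoneOn Ψ (Ici T₀) ∨ AntitoneOn Ψ (Ici T₀)) (hα : 0 < α) (hl : l ∈ Ioo 0 1)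
    (hN : ∀ n, N ≤ n → l ^ n / α ∈ θ '' Ioo 0 (exp (-T₀))) :
    Summable (fun n : ℕ =>
        (Function.invFunOn θ (Ioo 0 (exp (-T₀))) (l ^ (n + N) / α) / l ^ (n + N)) ^ Δ) ↔
      Summable (fun t : ℕ => exp (-(Δ / c) * Ψ (t + 1))) := by
  set r : ℕ → ℝ := fun n => Function.invFunOn θ (Ioo 0 (exp (-T₀))) (l ^ (n + N) / α)
  have hr (n : ℕ) : r n ∈ Ioo 0 (exp (-T₀)) ∧ θ (r n) = l ^ (n + N) / α :=
    ⟨Function.invFunOn_mem (hN _ le_add_self), Function.invFunOn_eq (hN _ le_add_self)⟩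
  set u : ℕ → ℝ := fun n => -log (r n)
  have hu (n : ℕ) : T₀ ≤ u n := (lt_neg_log_of_mem_Ioo (hr n).1).le
  have hθu (n : ℕ) : exp (-logProfile c Ψ (u n)) = l ^ (n + N) / α :=
    (hθ _ (hr n).1).symm.trans (hr n).2
  have hstep (n : ℕ) : logProfile c Ψ (u (n + 1)) = logProfile c Ψ (u n) + -log l := by
    have h : exp (-logProfile c Ψ (u (n + 1))) = exp (log l + -logProfile c Ψ (u n)) := by
      rw [exp_add, exp_log hl.1, hθu, hθu, add_right_comm, pow_succ]
      ring
    linarith [exp_injective h]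
  have hgaps := gaps_of_slope_bounds (neg_pos.2 (log_neg hl.1 hl.2)) hφ hu hstep
  have hterm (n : ℕ) : (r n / l ^ (n + N)) ^ Δ = α⁻¹ ^ Δ * exp (-(Δ / c) * Ψ (u n)) := by
    have hr' : r n = exp (-u n) := by simp [u, exp_log (hr n).1.1]
    have hl' : l ^ (n + N) = α * exp (-logProfile c Ψ (u n)) := by
      rw [hθu]
      field_simp
    rw [hr', hl', rpow_exp_neg_div_mul_exp_neg_logProfile hα]
  rw [funext hterm, summable_mul_left_iff (rpow_pos_of_pos (inv_pos.2 hα) _).ne']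
  have hv (t : ℕ) : T₀ ≤ ((t + ⌈T₀⌉₊ : ℕ) : ℝ) + 1 := by
    push_cast
    linarith [Nat.le_ceil T₀, (t.cast_nonneg : (0 : ℝ) ≤ t)]
  refine (summable_comp_iff_of_gaps (b' := 1) (fun _ => exp_pos _)
    (monotoneOn_or_antitoneOn_exp_mul hmono _) hu hv (by linarith [log_neg hl.1 hl.2]) one_pos
    (fun n => (hgaps n).1) (fun n => (hgaps n).2) (fun t => by push_cast; linarith)
    (fun t => by push_cast; linarith)).trans
    (summable_nat_add_iff (f := fun t : ℕ => exp (-(Δ / c) * Ψ (t + 1))) ⌈T₀⌉₊)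

theorem stmt_9_general (δ k : ℝ) (hkδ : k ≠ δ)
    (T : ℝ) (Ψ Ψ' : ℝ → ℝ)
    (hdiff : ∀ t ∈ Set.Ici T, HasDerivWithinAt Ψ (Ψ' t) (Set.Ici T) t)
    (hmono : MonotoneOn Ψ (Set.Ici T) ∨ AntitoneOn Ψ (Set.Ici T))
    (hlim : Filter.Tendsto Ψ' Filter.atTop (nhds 0))
    (θ : ℝ → ℝ)
    (hθ : ∀ r ∈ Set.Ioo (0:ℝ) (Real.exp (-T)),
      θ r = r * Real.exp (Ψ (Real.log (1 / r)) / (k - δ))) :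
    ∃ r₀ ∈ Set.Ioo (0:ℝ) (Real.exp (-T)),
      StrictMonoOn θ (Set.Ioo 0 r₀) ∧
      Filter.Tendsto θ (nhdsWithin 0 (Set.Ioi 0)) (nhds 0) ∧
      ∀ α : ℝ, 0 < α → ∀ l : ℝ, l ∈ Set.Ioo (0:ℝ) 1 →
        ∃ N : ℕ, (∀ n : ℕ, N ≤ n → l ^ n / α ∈ θ '' Set.Ioo 0 r₀) ∧
          (Summable (fun n : ℕ =>
              (Function.invFunOn θ (Set.Ioo 0 r₀) (l ^ (n + N) / α) / l ^ (n + N))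
                ^ (2 * δ - k)) ↔
            Summable (fun t : ℕ =>
              Real.exp (-((2 * δ - k) / (k - δ)) * Ψ (t + 1)))) := by
  obtain ⟨T₁, hTT₁, hφ⟩ := exists_logProfile_bounds (sub_ne_zero.2 hkδ) hdiff hlim
  have hsub : Ici (T₁ + 1) ⊆ Ici T := Ici_subset_Ici.2 (by linarith)
  have hr₀ : exp (-(T₁ + 1)) < exp (-T) := exp_lt_exp.2 (by linarith)
  have hθφ (r : ℝ) (hr : r ∈ Ioo 0 (exp (-(T₁ + 1)))) :
      θ r = exp (-logProfile (k - δ) Ψ (-log r)) := by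
    rw [hθ r ⟨hr.1, hr.2.trans hr₀⟩, one_div, log_inv, mul_exp_eq_exp_neg_logProfile hr.1]
  have hφ₀ (x y : ℝ) (hx : T₁ + 1 ≤ x) := hφ x y (by linarith)
  have hcont : ContinuousOn (logProfile (k - δ) Ψ) (Ici (T₁ + 1)) :=
    (continuousOn_logProfile fun t ht => (hdiff t ht).continuousWithinAt).mono hsub
  have htend := tendsto_nhdsGT_zero_of_eq_exp_neg_comp hθφ fun x y hx hxy => (hφ₀ x y hx hxy).1
  refine ⟨_, ⟨exp_pos _, hr₀⟩,
    strictMonoOn_of_eq_exp_neg_comp hθφ fun x y hx hxy => (hφ₀ x y hx hxy).1, htend,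
    fun α hα l hl => ?_⟩
  obtain ⟨N, hN⟩ := exists_forall_pow_div_mem_image (exp_pos _)
    (continuousOn_of_eq_exp_neg_comp hθφ hcont) htend (fun r hr => hθφ r hr ▸ exp_pos _) hα hl
  exact ⟨N, hN, summable_rpow_invFunOn_div_pow_iff hθφ hφ₀
    (hmono.imp (·.mono hsub) (·.mono hsub)) hα hl hN⟩

/-- Let `δ, k > 0` with `k ≠ δ` and `Δ = 2δ - k > 0`, and let `Ψ` be differentiable and
monotonic on `[T,∞)` with `Ψ'(t) → 0`. Set `θ(r) = r · exp(Ψ(log(1/r))/(k-δ))` for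
`r ∈ (0, e^{-T})`. Then there is `r₀ ∈ (0, e^{-T})` such that `θ` is strictly increasing on
`(0, r₀)` with `θ(r) → 0` as `r → 0+`; moreover, for every `α > 0` and `l ∈ (0,1)`, the
series `Σ_n (θ⁻¹(lⁿ/α)/lⁿ)^Δ` (over all sufficiently large `n`, for which `lⁿ/α` is in the
image of `θ` on `(0,r₀)`) converges if and only if
`Σ_{t=1}^∞ exp(-(Δ/(k-δ))·Ψ(t))` converges. -/
theorem stmt_9 (δ k : ℝ) (hδ : 0 < δ) (hk : 0 < k) (hkδ : k ≠ δ) (hΔ : 0 < 2 * δ - k)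
    (T : ℝ) (Ψ Ψ' : ℝ → ℝ)
    (hdiff : ∀ t ∈ Set.Ici T, HasDerivWithinAt Ψ (Ψ' t) (Set.Ici T) t)
    (hmono : MonotoneOn Ψ (Set.Ici T) ∨ AntitoneOn Ψ (Set.Ici T))
    (hlim : Filter.Tendsto Ψ' Filter.atTop (nhds 0))
    (θ : ℝ → ℝ)
    (hθ : ∀ r ∈ Set.Ioo (0:ℝ) (Real.exp (-T)),
      θ r = r * Real.exp (Ψ (Real.log (1 / r)) / (k - δ))) :
    ∃ r₀ ∈ Set.Ioo (0:ℝ) (Real.exp (-T)),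
      StrictMonoOn θ (Set.Ioo 0 r₀) ∧
      Filter.Tendsto θ (nhdsWithin 0 (Set.Ioi 0)) (nhds 0) ∧
      ∀ α : ℝ, 0 < α → ∀ l : ℝ, l ∈ Set.Ioo (0:ℝ) 1 →
        ∃ N : ℕ, (∀ n : ℕ, N ≤ n → l ^ n / α ∈ θ '' Set.Ioo 0 r₀) ∧
          (Summable (fun n : ℕ =>
              (Function.invFunOn θ (Set.Ioo 0 r₀) (l ^ (n + N) / α) / l ^ (n + N))
                ^ (2 * δ - k)) ↔
            Summable (fun t : ℕ =>
              Real.exp (-((2 * δ - k) / (k - δ)) * Ψ (t + 1)))) :=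
  stmt_9_general δ k hkδ T Ψ Ψ' hdiff hmono hlim θ hθ
end
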